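/- Let H ∈ k⟦X⟧ have constant coefficient 0 and coefficient of X equal to 1, and let T ∈ k⟦X⟧ have constant coefficient 0 and coefficient of X equal to 1 with H∘T = T′·X; let T^{∘−1} denote the compositional inverse of T. Then a power series Φ of order 1 satisfies H∘Φ = Φ′·H if and only if there exists c ∈ k, c ≠ 0, such that Φ = T∘(c·X)∘T^{∘−1}. -/

import Mathlib

/-!
Conjugating by `T` turns the Aczél–Jabotinsky equation `H∘Φ = Φ′·H` into the equation
`ψ = ψ′·X` for `ψ = T^{∘-1}∘Φ∘T`: composing both sides with `T` and using `H∘T = T′·X` and the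
chain rule, each side becomes `(T′∘ψ)` times `ψ` resp. `ψ′·X`, and `T′∘ψ` has constant
coefficient `1`. Comparing coefficients, `ψ = ψ′·X` forces `ψ = c·X` in characteristic zero.
-/

open PowerSeries

variable {k : Type*} [Field k] [CharZero k]

/-- Substitution of `g` (with zero constant coefficient) into `f`. -/
noncomputable def comp (f g : PowerSeries k) : PowerSeries k :=
  PowerSeries.mk fun m => ∑ n ∈ Finset.range (m + 1),
    PowerSeries.coeff n f * PowerSeries.coeff m (g ^ n)

lemma derivativeFun_eq_derivative {R : Type*} [CommSemiring R] (f : R⟦X⟧) :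
    derivativeFun f = d⁄dX R f :=
  rfl

lemma eq_derivative_mul_X_iff {R : Type*} [CommRing R] [IsDomain R] [CharZero R] (ψ : R⟦X⟧) :
    ψ = d⁄dX R ψ * X ↔ ψ = C (coeff 1 ψ) * X := by
  constructor
  · intro h
    ext n
    have hn := congrArg (coeff n) h
    rcases n with _ | _ | n
    · simpa using hn
    · simp
    · rw [coeff_succ_mul_X, coeff_derivative] at hn
      have : ((n : R) + 1) * coeff (n + 2) ψ = 0 := by push_cast at hn; linear_combination -hn
      simpa [coeff_X, Nat.cast_add_one_ne_zero] using this
  · intro h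
    rw [h, Derivation.leibniz, derivative_C, derivative_X]
    simp

lemma constantCoeff_comp {K : Type*} [Field K] (f g : K⟦X⟧) :
    constantCoeff (comp f g) = constantCoeff f := by
  simp [comp, ← coeff_zero_eq_constantCoeff]

lemma comp_eq_subst {K : Type*} [Field K] (f : K⟦X⟧) {g : K⟦X⟧}
    (hg : constantCoeff g = 0) : comp f g = f.subst g := by
  ext m
  rw [coeff_subst' (HasSubst.of_constantCoeff_zero' hg), finsum_eq_sum_of_support_subset _
    (s := Finset.range (m + 1))]
  · simp [comp]
  · intro d hd
    simp only [Function.mem_support, Finset.coe_range, Set.mem_Iio] at hd ⊢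
    by_contra! hmd
    refine hd ?_
    rw [coeff_of_lt_order m ((Nat.cast_lt.2 hmd).trans_le
      (le_order_pow_of_constantCoeff_eq_zero d hg)), smul_zero]

section Conjugation

variable {R : Type*} [CommRing R] {T Tinv : R⟦X⟧}

lemma hasSubst_subst {a b : R⟦X⟧} (ha : HasSubst a) (hb : HasSubst b) : HasSubst (subst b a) := by
  simpa only [coe_substAlgHom] using ha.comp hb

lemma subst_subst_of_subst_eq_X (hT : HasSubst T) (hTinv : HasSubst Tinv) (h : subst Tinv T = X)
    (f : R⟦X⟧) : subst Tinv (subst T f) = f := by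
  rw [subst_comp_subst_apply hT hTinv, h, X_subst]

lemma subst_eq_subst_conj {Φ : R⟦X⟧} (hT : HasSubst T) (hTinv : HasSubst Tinv) (hΦ : HasSubst Φ)
    (h : subst Tinv T = X) : subst T Φ = subst (subst T (subst Φ Tinv)) T := by
  rw [← subst_comp_subst_apply (hasSubst_subst hTinv hΦ) hT, ← subst_comp_subst_apply hTinv hΦ, h,
    subst_X hΦ]

lemma constantCoeff_subst_of_constantCoeff_eq_zero {a : R⟦X⟧} (ha : constantCoeff a = 0)
    (f : R⟦X⟧) : constantCoeff (subst a f) = constantCoeff f := by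
  rw [← coeff_zero_eq_constantCoeff_apply, coeff_subst' (HasSubst.of_constantCoeff_zero' ha),
    finsum_eq_single _ 0]
  · simp
  · intro d hd
    simp [coeff_zero_eq_constantCoeff_apply, ha, zero_pow hd]

variable [IsDomain R]

lemma subst_eq_derivative_mul_iff {H Φ ψ : R⟦X⟧} (hT : HasSubst T) (hTinv : HasSubst Tinv)
    (hΦ : HasSubst Φ) (hψ : HasSubst ψ) (hTTinv : subst Tinv T = X) (hT1 : coeff 1 T ≠ 0)
    (hTH : subst T H = d⁄dX R T * X) (hΦψ : subst T Φ = subst ψ T) :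
    subst Φ H = d⁄dX R Φ * H ↔ ψ = d⁄dX R ψ * X := by
  have hlhs : subst T (subst Φ H) = subst ψ (d⁄dX R T) * ψ := by
    rw [subst_comp_subst_apply hΦ hT, hΦψ, ← subst_comp_subst_apply hT hψ, hTH, subst_mul hψ,
      subst_X hψ]
  have hrhs : subst T (d⁄dX R Φ * H) = subst ψ (d⁄dX R T) * (d⁄dX R ψ * X) := by
    rw [subst_mul hT, hTH, ← mul_assoc, ← derivative_subst hT, hΦψ, derivative_subst hψ, mul_assoc]
  have hne : subst ψ (d⁄dX R T) ≠ 0 := by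
    have hψ0 : constantCoeff ψ = 0 := hψ.eq_zero
    intro h
    have h0 := congrArg constantCoeff h
    rw [constantCoeff_subst_of_constantCoeff_eq_zero hψ0, ← coeff_zero_eq_constantCoeff_apply,
      coeff_derivative, map_zero] at h0
    simp [hT1] at h0
  rw [← (Function.LeftInverse.injective (subst_subst_of_subst_eq_X hT hTinv hTTinv)).eq_iff,
    hlhs, hrhs, mul_right_inj' hne]

end Conjugation

theorem aczel_jabotinsky_solutions_conjugates_general (H T Tinv : PowerSeries k)
    (hT0 : constantCoeff T = 0) (hT1 : coeff 1 T = 1)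
    (hTnorm : comp H T = derivativeFun T * X)
    (hTTinv : comp T Tinv = X) (hTinvT : comp Tinv T = X)
    (Φ : PowerSeries k)
    (hΦ0 : constantCoeff Φ = 0) (hΦ1 : coeff 1 Φ ≠ 0) :
    comp H Φ = derivativeFun Φ * H ↔
      ∃ c : k, c ≠ 0 ∧ Φ = comp (comp T (C c * X)) Tinv := by
  have hTinv0 : constantCoeff Tinv = 0 := by
    rw [← constantCoeff_comp Tinv T, hTinvT, constantCoeff_X]
  have hcX (c : k) : constantCoeff (C c * X) = 0 := by simp
  simp only [comp_eq_subst _ hT0, comp_eq_subst _ hTinv0, comp_eq_subst _ hΦ0,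
    comp_eq_subst _ (hcX _), derivativeFun_eq_derivative] at hTnorm hTTinv hTinvT ⊢
  have hT := HasSubst.of_constantCoeff_zero' hT0
  have hTinv := HasSubst.of_constantCoeff_zero' hTinv0
  have hΦ := HasSubst.of_constantCoeff_zero' hΦ0
  have conj (ψ : k⟦X⟧) (hψ : HasSubst ψ) (hΦψ : subst T Φ = subst ψ T) :=
    subst_eq_derivative_mul_iff hT hTinv hΦ hψ hTTinv (by simp [hT1]) hTnorm hΦψ
  constructor
  · intro hAJ
    have hΦψ := subst_eq_subst_conj hT hTinv hΦ hTTinv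
    set ψ : k⟦X⟧ := subst T (subst Φ Tinv)
    have hψ : HasSubst ψ := hasSubst_subst (hasSubst_subst hTinv hΦ) hT
    have hψX := (eq_derivative_mul_X_iff ψ).1 ((conj ψ hψ hΦψ).1 hAJ)
    have hΦ_eq : Φ = subst Tinv (subst (C (coeff 1 ψ) * X) T) := by
      rw [← hψX, ← hΦψ, subst_subst_of_subst_eq_X hT hTinv hTTinv]
    refine ⟨coeff 1 ψ, fun hc => hΦ1 ?_, hΦ_eq⟩
    rw [hΦ_eq, hc, map_zero, zero_mul, subst_zero_of_constantCoeff_zero hT0,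
      ← coe_substAlgHom hTinv, map_zero, map_zero]
  · rintro ⟨c, -, rfl⟩
    refine (conj (C c * X) (.of_constantCoeff_zero' (hcX c)) ?_).2
      ((eq_derivative_mul_X_iff _).2 (by simp))
    exact subst_subst_of_subst_eq_X hTinv hT hTinvT _

/-- If `T` is the normalizing transformation with `H∘T = T′·X`, then the
order-1 solutions of the Aczél–Jabotinsky equation with generator `H` are
exactly the conjugates `T∘(cX)∘T^{∘-1}` with `c ≠ 0`. -/
theorem aczel_jabotinsky_solutions_conjugates (H T Tinv : PowerSeries k)
    (hH0 : constantCoeff H = 0) (hH1 : coeff 1 H = 1)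
    (hT0 : constantCoeff T = 0) (hT1 : coeff 1 T = 1)
    (hTnorm : comp H T = derivativeFun T * X)
    (hTTinv : comp T Tinv = X) (hTinvT : comp Tinv T = X)
    (Φ : PowerSeries k)
    (hΦ0 : constantCoeff Φ = 0) (hΦ1 : coeff 1 Φ ≠ 0) :
    comp H Φ = derivativeFun Φ * H ↔
      ∃ c : k, c ≠ 0 ∧ Φ = comp (comp T (C c * X)) Tinv :=
  aczel_jabotinsky_solutions_conjugates_general H T Tinv hT0 hT1 hTnorm hTTinv hTinvT Φ hΦ0 hΦ1
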